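/- Let S be a finite non-nested set of intervals, let t be a natural number, and let j = |{(d, a) ∈ S : d < t}|. If j < |S|, then the pair (d*, a*), where d* is the (j+1)-th smallest departure of S and a* is the (j+1)-th smallest arrival of S, is a member of S, satisfies d* ≥ t, and is the earliest interval of S starting at time t or later: every (d, a) ∈ S with d ≥ t satisfies d* ≤ d and a* ≤ a. (Correctness of the find_next algorithm on the two-bit-vector representation.) -/

import Mathlib

/-!
Rank a number `c` in a finite set `T` by `Nat.count (· ∈ T) c`, the number of elements of `T`
below `c`; the `(r+1)`-th smallest element of `T` is its element of rank `r`. In a non-nested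
set departures and arrivals are ordered alike, so the departure and the arrival of each interval
have the same rank, and the `(j+1)`-th departure and the `(j+1)`-th arrival belong to one
interval. Since exactly `j` departures lie below `t`, that interval departs at `t` or later, and
every interval departing at `t` or later has departure and arrival of rank at least `j`.
-/

/-- An interval `I = (d, a)` is contained in `I' = (d', a')` if `d' ≤ d` and `a ≤ a'`. -/
def Contained (I I' : ℕ × ℕ) : Prop := I'.1 ≤ I.1 ∧ I.2 ≤ I'.2

/-- A finite set of intervals is non-nested if no member is contained in a distinct member. -/
def NonNested (S : Finset (ℕ × ℕ)) : Prop :=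
  ∀ I ∈ S, ∀ I' ∈ S, I ≠ I' → ¬ Contained I I' ∧ ¬ Contained I' I

/-- The `i`-th smallest element (1-indexed) of a finite set of naturals. -/
def nthSmallest (T : Finset ℕ) (i : ℕ) : ℕ := (T.sort (· ≤ ·)).getD (i - 1) 0

open Finset

theorem nthSmallest_succ_eq_nth (T : Finset ℕ) (k : ℕ) :
    nthSmallest T (k + 1) = Nat.nth (· ∈ T) k := by
  rw [nthSmallest, Nat.add_sub_cancel, Nat.nth_eq_getD_sort (p := (· ∈ T)) T.finite_toSet]
  simp

theorem Nat.count_mem_eq_card_filter_lt (T : Finset ℕ) (c : ℕ) :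
    Nat.count (· ∈ T) c = #{x ∈ T | x < c} := by
  rw [Nat.count_eq_card_filter_range]
  congr 1
  ext x
  simp [and_comm]

section nthSmallest

variable {T : Finset ℕ} {k y : ℕ}

theorem nthSmallest_mem (hk : k < #T) : nthSmallest T (k + 1) ∈ T := by
  rw [nthSmallest_succ_eq_nth]
  exact Nat.nth_mem_of_lt_card T.finite_toSet (by simpa using hk)

theorem count_nthSmallest (hk : k < #T) : Nat.count (· ∈ T) (nthSmallest T (k + 1)) = k := by
  rw [nthSmallest_succ_eq_nth]
  exact Nat.count_nth_of_lt_card_finite T.finite_toSet (by simpa using hk)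

theorem nthSmallest_count (hy : y ∈ T) : nthSmallest T (Nat.count (· ∈ T) y + 1) = y := by
  rw [nthSmallest_succ_eq_nth, Nat.nth_count hy]

theorem nthSmallest_le (hy : y ∈ T) (h : k ≤ Nat.count (· ∈ T) y) :
    nthSmallest T (k + 1) ≤ y := by
  rw [nthSmallest_succ_eq_nth]
  calc Nat.nth (· ∈ T) k ≤ Nat.nth (· ∈ T) (Nat.count (· ∈ T) y) :=
        Nat.nth_le_nth' h fun hf => Nat.count_lt_card hf hy
    _ = y := Nat.nth_count hy

theorem le_nthSmallest (hk : k < #T) (h : Nat.count (· ∈ T) y ≤ k) :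
    y ≤ nthSmallest T (k + 1) := by
  by_contra! hlt
  have := Nat.count_strict_mono (p := (· ∈ T)) (nthSmallest_mem hk) hlt
  rw [count_nthSmallest hk] at this
  omega

end nthSmallest

theorem Nat.count_mem_image_of_injOn {α : Type*} [DecidableEq α] {S : Finset α} {f : α → ℕ}
    (hf : Set.InjOn f S) (c : ℕ) :
    Nat.count (fun x : ℕ => x ∈ S.image f) c = #{I ∈ S | f I < c} := by
  rw [Nat.count_mem_eq_card_filter_lt, filter_image]
  exact Finset.card_image_of_injOn (hf.mono (coe_subset.2 (filter_subset (f · < c) S)))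

namespace NonNested

variable {S : Finset (ℕ × ℕ)} {I J : ℕ × ℕ}

theorem fst_lt_fst_iff (hS : NonNested S) (hI : I ∈ S) (hJ : J ∈ S) :
    I.1 < J.1 ↔ I.2 < J.2 := by
  rcases eq_or_ne I J with rfl | hne
  · simp
  obtain ⟨hIJ, hJI⟩ := hS I hI J hJ hne
  simp only [Contained, not_and, not_le] at hIJ hJI
  constructor
  · exact fun h => hJI h.le
  · exact fun h => not_le.1 fun hle => (hIJ hle).not_gt h

theorem injOn_fst (hS : NonNested S) : Set.InjOn Prod.fst (S : Set (ℕ × ℕ)) := by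
  intro I hI J hJ h
  by_contra hne
  obtain ⟨hIJ, hJI⟩ := hS I hI J hJ hne
  rcases le_total I.2 J.2 with hle | hle
  · exact hIJ ⟨h.ge, hle⟩
  · exact hJI ⟨h.le, hle⟩

theorem injOn_snd (hS : NonNested S) : Set.InjOn Prod.snd (S : Set (ℕ × ℕ)) := by
  intro I hI J hJ h
  by_contra hne
  obtain ⟨hIJ, hJI⟩ := hS I hI J hJ hne
  rcases le_total I.1 J.1 with hle | hle
  · exact hJI ⟨hle, h.ge⟩
  · exact hIJ ⟨hle, h.le⟩

theorem count_fst_eq_count_snd (hS : NonNested S) (hI : I ∈ S) :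
    Nat.count (· ∈ S.image Prod.fst) I.1 = Nat.count (· ∈ S.image Prod.snd) I.2 := by
  rw [Nat.count_mem_image_of_injOn hS.injOn_fst, Nat.count_mem_image_of_injOn hS.injOn_snd]
  exact congrArg card (filter_congr fun J hJ => hS.fst_lt_fst_iff hJ hI)

end NonNested

theorem stmt5_general (S : Finset (ℕ × ℕ)) (hnn : NonNested S)
    (t : ℕ) (j : ℕ) (hj : j = (S.filter (fun I => I.1 < t)).card) (hjlt : j < S.card) :
    (nthSmallest (S.image Prod.fst) (j + 1), nthSmallest (S.image Prod.snd) (j + 1)) ∈ S ∧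
    t ≤ nthSmallest (S.image Prod.fst) (j + 1) ∧
    (∀ I ∈ S, t ≤ I.1 →
      nthSmallest (S.image Prod.fst) (j + 1) ≤ I.1 ∧
      nthSmallest (S.image Prod.snd) (j + 1) ≤ I.2) := by
  have hjD : j < #(S.image Prod.fst) := by rwa [Finset.card_image_of_injOn hnn.injOn_fst]
  have hjt : Nat.count (· ∈ S.image Prod.fst) t = j := by
    rw [hj, Nat.count_mem_image_of_injOn hnn.injOn_fst]
  have hj_le : ∀ I ∈ S, t ≤ I.1 → j ≤ Nat.count (· ∈ S.image Prod.fst) I.1 :=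
    fun _ _ ht => hjt ▸ Nat.count_monotone _ ht
  obtain ⟨I, hI, hId⟩ := mem_image.1 (nthSmallest_mem hjD)
  have hIa : nthSmallest (S.image Prod.snd) (j + 1) = I.2 := by
    rw [← count_nthSmallest hjD, ← hId, hnn.count_fst_eq_count_snd hI,
      nthSmallest_count (mem_image_of_mem _ hI)]
  refine ⟨by rwa [← hId, hIa], le_nthSmallest hjD hjt.le, fun J hJ ht => ⟨?_, ?_⟩⟩
  · exact nthSmallest_le (mem_image_of_mem _ hJ) (hj_le J hJ ht)
  · refine nthSmallest_le (mem_image_of_mem _ hJ) ?_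
    rw [← hnn.count_fst_eq_count_snd hJ]
    exact hj_le J hJ ht

theorem stmt5 (S : Finset (ℕ × ℕ)) (hval : ∀ I ∈ S, I.1 ≤ I.2) (hnn : NonNested S)
    (t : ℕ) (j : ℕ) (hj : j = (S.filter (fun I => I.1 < t)).card) (hjlt : j < S.card) :
    (nthSmallest (S.image Prod.fst) (j + 1), nthSmallest (S.image Prod.snd) (j + 1)) ∈ S ∧
    t ≤ nthSmallest (S.image Prod.fst) (j + 1) ∧
    (∀ I ∈ S, t ≤ I.1 →
      nthSmallest (S.image Prod.fst) (j + 1) ≤ I.1 ∧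
      nthSmallest (S.image Prod.snd) (j + 1) ≤ I.2) :=
  stmt5_general S hnn t j hj hjlt
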